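/- arXiv:1708.08596 — 3 statements merged into one kernel-verified Lean document; each statement's English description precedes it below -/
import Mathlib

section
/- Two traces are low-equivalent if and only if their low-projections (the subsequences consisting of events whose labels lie in the low set L) are equal up to event equivalence. In particular, a trace all of whose events have labels outside L is low-equivalent to the empty trace. -/
/-- Trace events: the silent event `•`, protected values `⟨η_ℓ v⟩`, and
downgrade events `⟨↓^π_{ℓ'⇝ℓ} v⟩` (π = true for declassification `→`,
π = false for endorsement `←`). -/
inductive Event (L V : Type) where
  | silent : Event L V
  | ret : L → V → Event L V
  | down : Bool → L → L → V → Event L V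

/-- Event equivalence `c ≈_L c'`: the smallest congruence (equivalence
relation) on events containing Eq-UnitM and Eq-Down, which identify any event
whose label is not in the low set `low` with the silent event `•`. -/
inductive EvEq {L V : Type} (low : Set L) : Event L V → Event L V → Prop
  | refl (c : Event L V) : EvEq low c c
  | symm {c c' : Event L V} : EvEq low c c' → EvEq low c' c
  | trans {c₁ c₂ c₃ : Event L V} : EvEq low c₁ c₂ → EvEq low c₂ c₃ → EvEq low c₁ c₃
  | highRet {ℓ : L} {v : V} : ℓ ∉ low → EvEq low (.ret ℓ v) .silent
  | highDown {π : Bool} {ℓ' ℓ : L} {v : V} : ℓ ∉ low → EvEq low (.down π ℓ' ℓ v) .silent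

/-- Traces are finite sequences of events (`ε` is `[]`, `t;t'` is `t ++ t'`).
Low trace equivalence `t ≈_L t'` is the smallest congruence over trace
concatenation containing lifted event equivalence (T-Lift) and the absorption
laws `t;• ≈ t` (T-BulletR) and `•;t ≈ t` (T-BulletL). -/
inductive TraceEq {L V : Type} (low : Set L) : List (Event L V) → List (Event L V) → Prop
  | lift {c c' : Event L V} : EvEq low c c' → TraceEq low [c] [c']
  | bulletR (t : List (Event L V)) : TraceEq low (t ++ [.silent]) t
  | bulletL (t : List (Event L V)) : TraceEq low (.silent :: t) t
  | refl (t : List (Event L V)) : TraceEq low t t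
  | symm {t t' : List (Event L V)} : TraceEq low t t' → TraceEq low t' t
  | trans {t₁ t₂ t₃ : List (Event L V)} :
      TraceEq low t₁ t₂ → TraceEq low t₂ t₃ → TraceEq low t₁ t₃
  | append {t₁ t₁' t₂ t₂' : List (Event L V)} :
      TraceEq low t₁ t₁' → TraceEq low t₂ t₂' →
      TraceEq low (t₁ ++ t₂) (t₁' ++ t₂')

/-- An event is *low* (not equivalent to `•`) if it carries a label in `low`. -/
def LowEvent {L V : Type} (low : Set L) : Event L V → Prop
  | .silent => False
  | .ret ℓ _ => ℓ ∈ low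
  | .down _ _ ℓ _ => ℓ ∈ low

/-- The low-projection of a trace: the subsequence of events whose labels lie
in the low set (deleting all events equivalent to `•`). -/
noncomputable def lowProj {L V : Type} (low : Set L) :
    List (Event L V) → List (Event L V)
  | [] => []
  | c :: t =>
      haveI := Classical.propDecidable (LowEvent low c)
      if LowEvent low c then c :: lowProj low t else lowProj low t

lemma evEq_low_iff {L V : Type} {low : Set L} {c c' : Event L V}
    (h : EvEq low c c') : LowEvent low c ↔ LowEvent low c' := by
  induction h with
  | refl => rfl
  | symm _ ih => exact ih.symm
  | trans _ _ ih1 ih2 => exact ih1.trans ih2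
  | highRet h => simpa [LowEvent] using h
  | highDown h => simpa [LowEvent] using h

lemma evEq_silent_of_not_low {L V : Type} {low : Set L} {c : Event L V}
    (h : ¬ LowEvent low c) : EvEq low c .silent := by
  cases c with
  | silent => exact .refl _
  | ret ℓ v => exact .highRet h
  | down π ℓ' ℓ v => exact .highDown h

lemma lowProj_append {L V : Type} (low : Set L) (t t' : List (Event L V)) :
    lowProj low (t ++ t') = lowProj low t ++ lowProj low t' := by
  induction t with
  | nil => simp [lowProj]
  | cons c t ih =>
      simp only [List.cons_append, lowProj]
      split <;> simp [ih]

lemma forall₂_evEq_trans {L V : Type} {low : Set L}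
    {s₁ s₂ s₃ : List (Event L V)} (h1 : List.Forall₂ (EvEq low) s₁ s₂)
    (h2 : List.Forall₂ (EvEq low) s₂ s₃) : List.Forall₂ (EvEq low) s₁ s₃ := by
  induction h1 generalizing s₃ with
  | nil => cases h2; exact .nil
  | cons h _ ih => cases h2 with
      | cons h' hs => exact .cons (h.trans h') (ih hs)

lemma forall₂_evEq_refl {L V : Type} {low : Set L} (s : List (Event L V)) :
    List.Forall₂ (EvEq low) s s := by
  induction s with
  | nil => exact .nil
  | cons c t ih => exact .cons (.refl c) ih

lemma forall₂_evEq_append {L V : Type} {low : Set L}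
    {a b c d : List (Event L V)} (h1 : List.Forall₂ (EvEq low) a b)
    (h2 : List.Forall₂ (EvEq low) c d) :
    List.Forall₂ (EvEq low) (a ++ c) (b ++ d) := by
  induction h1 with
  | nil => exact h2
  | cons h _ ih => exact .cons h ih

lemma traceEq_of_forall₂ {L V : Type} {low : Set L}
    {s s' : List (Event L V)} (h : List.Forall₂ (EvEq low) s s') :
    TraceEq low s s' := by
  induction h with
  | nil => exact .refl []
  | cons h _ ih =>
      exact TraceEq.append (t₁ := [_]) (t₁' := [_]) (.lift h) ih

lemma traceEq_lowProj {L V : Type} (low : Set L) (t : List (Event L V)) :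
    TraceEq low t (lowProj low t) := by
  induction t with
  | nil => exact .refl []
  | cons c t ih =>
      by_cases hc : LowEvent low c
      · simpa [lowProj, hc] using
          TraceEq.append (t₁ := [c]) (t₁' := [c]) (.refl [c]) ih
      · have h1 : TraceEq low (c :: t) (Event.silent :: lowProj low t) := by
          exact TraceEq.append (t₁ := [c]) (t₁' := [.silent])
            (.lift (evEq_silent_of_not_low hc)) ih
        simpa [lowProj, hc] using h1.trans (.bulletL _)

/-- Two traces are low-equivalent iff their low-projections are equal up to
event equivalence; in particular, a trace all of whose events have labels
outside the low set is low-equivalent to the empty trace. -/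
theorem traceEq_iff_lowProj {L V : Type} (low : Set L) :
    (∀ t t' : List (Event L V),
      TraceEq low t t' ↔ List.Forall₂ (EvEq low) (lowProj low t) (lowProj low t')) ∧
    (∀ t : List (Event L V), (∀ c ∈ t, ¬ LowEvent low c) → TraceEq low t []) := by
  have main : ∀ t t' : List (Event L V),
      TraceEq low t t' ↔
        List.Forall₂ (EvEq low) (lowProj low t) (lowProj low t') := by
    intro t t'
    constructor
    · intro h
      induction h with
      | @lift c c' h =>
          by_cases hc : LowEvent low c
          · have hc' := (evEq_low_iff h).mp hc
            simpa [lowProj, hc, hc'] using List.Forall₂.cons h List.Forall₂.nil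
          · have hc' : ¬ LowEvent low c' := fun x => hc ((evEq_low_iff h).mpr x)
            simp [lowProj, hc, hc']
      | bulletR t => simpa [lowProj_append, lowProj, LowEvent] using forall₂_evEq_refl _
      | bulletL t => simpa [lowProj, LowEvent] using forall₂_evEq_refl _
      | refl t => exact forall₂_evEq_refl _
      | symm _ ih => exact ih.flip.imp fun _ _ h => h.symm
      | trans _ _ ih1 ih2 => exact forall₂_evEq_trans ih1 ih2
      | append _ _ ih1 ih2 => rw [lowProj_append, lowProj_append]; exact forall₂_evEq_append ih1 ih2
    · intro h
      exact (traceEq_lowProj low t).trans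
        ((traceEq_of_forall₂ h).trans (traceEq_lowProj low t').symm)
  refine ⟨main, fun t ht => (main t []).mpr ?_⟩
  have : lowProj low t = [] := by
    induction t with
    | nil => rfl
    | cons c t ih =>
        simp [lowProj, ht c (by simp)]
        exact ih fun c hc => ht c (by simp [hc])
  simp [this, lowProj]
end

section
/- For an attacker A = { ℓ | n₁ ∧ ⋯ ∧ n_k ≽ ℓ }, the attacker has symmetric power in confidentiality and integrity: for all a ∈ A, voice(a^→) ∧ view(a^←) ∈ A. -/
/-- A FLAM label/principal in normal form `p^→ ∧ q^←`: a confidentiality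
component and an integrity component, drawn from a lattice `B` of principal
formulas ordered by the trust (acts-for) order. -/
structure Lbl (B : Type) where
  conf : B
  integ : B

variable {B : Type} [Lattice B] [BoundedOrder B]

/-- The acts-for (trust) order on labels: `a ≽ b` iff `a` dominates `b` in
both the confidentiality and the integrity component. -/
def LblActsFor (a b : Lbl B) : Prop :=
  b.conf ≤ a.conf ∧ b.integ ≤ a.integ

/-- Conjunction `a ∧ b` of labels (join in the trust ordering). -/
def Lbl.conj (a b : Lbl B) : Lbl B := ⟨a.conf ⊔ b.conf, a.integ ⊔ b.integ⟩

/-- Confidentiality projection `ℓ^→` (the integrity part becomes `⊥`). -/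
def Lbl.confP (ℓ : Lbl B) : Lbl B := ⟨ℓ.conf, ⊥⟩

/-- Integrity projection `ℓ^←` (the confidentiality part becomes `⊥`). -/
def Lbl.integP (ℓ : Lbl B) : Lbl B := ⟨⊥, ℓ.integ⟩

/-- Voice: `∇(p^→ ∧ q^←) = p^←`. -/
def Lbl.voice (ℓ : Lbl B) : Lbl B := ⟨⊥, ℓ.conf⟩

/-- View: `Δ(p^→ ∧ q^←) = q^→`. -/
def Lbl.view (ℓ : Lbl B) : Lbl B := ⟨ℓ.integ, ⊥⟩

/-- Attackers have symmetric power in confidentiality and integrity: for the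
attacker set `A = { ℓ | n₁ ∧ ⋯ ∧ n_k ≽ ℓ }` generated by the (symmetric)
conjunction of atomic principals `atk`, every `a ∈ A` satisfies
`∇(a^→) ∧ Δ(a^←) ∈ A`. -/
theorem attacker_voice_view_symmetric (atk : B) :
    ∀ a : Lbl B, a ∈ { ℓ : Lbl B | LblActsFor ⟨atk, atk⟩ ℓ } →
      Lbl.conj (Lbl.voice a.confP) (Lbl.view a.integP) ∈
        { ℓ : Lbl B | LblActsFor ⟨atk, atk⟩ ℓ } := by
  rintro a ⟨h1, h2⟩
  exact ⟨sup_le bot_le h2, sup_le h1 bot_le⟩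
end

section
/- Confidentiality cannot escape a secret high set via well-formed declassification when the declassified data is untrusted: if ℓ'^← ∈ A^← (the data is untrusted), ℓ^→ ∈ A^→ (the target is attacker-readable), and ℓ^→ ∧ view((ℓ' ∨ pc)^←) ≽ ℓ'^→ (the Decl robustness premise, in acts-for form), then ℓ'^→ ∈ A^→ (the source was already attacker-readable). -/
/-!
Principal formulas live in a lattice `B` ordered by the trust (acts-for)
order, so conjunction `∧` is `⊔`, disjunction `∨` is `⊓`, and `p ≽ q` is
`q ≤ p`.  The attacker's confidentiality and integrity components are sets
`Ac = A^→` and `Ai = A^←` of principal formulas; the voice/view operators act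
as the identity on the underlying formulas, so voice/view symmetry says that
`Ai`-members are `Ac`-members (and vice versa).
-/

/-- Confidentiality cannot escape via well-formed declassification of
untrusted data: if the attacker components `Ac = A^→`, `Ai = A^←` are closed
under meets, attenuation by disjunction, view symmetry, and downward
transitivity of acts-for, and if `ℓ'^← ∈ A^←` (the data is untrusted),
`ℓ^→ ∈ A^→` (the target is attacker-readable), and the Decl robustness premise
`ℓ^→ ∧ Δ((ℓ' ∨ pc)^←) ≽ ℓ'^→` holds, then `ℓ'^→ ∈ A^→` (the source was
already attacker-readable). -/
theorem untrusted_decl_source_attacker_readable {B : Type} [Lattice B]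
    (Ac Ai : Set B)
    -- attacking principals may collude: `A^π` closed under conjunction (meets in trust)
    (hmeet : ∀ a₁ ∈ Ac, ∀ a₂ ∈ Ac, a₁ ⊔ a₂ ∈ Ac)
    -- attackers may attenuate their power: closure under disjunction with anything
    (hatten : ∀ a ∈ Ai, ∀ b : B, a ⊓ b ∈ Ai)
    -- voice/view symmetry: the view of an attacker integrity level is attacker-readable
    (hview : ∀ b ∈ Ai, b ∈ Ac)
    -- downward transitivity of acts-for within `A`
    (hdown : ∀ a ∈ Ac, ∀ b : B, b ≤ a → b ∈ Ac)
    -- the labels involved: `ℓ' = ⟨c', i'⟩`, `ℓ = ⟨c, ·⟩`, `pc` integrity `pci`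
    (c' i' c pci : B)
    (hi' : i' ∈ Ai)            -- `ℓ'^← ∈ A^←`
    (hc : c ∈ Ac)              -- `ℓ^→ ∈ A^→`
    -- Decl robustness premise `ℓ^→ ∧ Δ((ℓ' ∨ pc)^←) ≽ ℓ'^→` in acts-for form
    (hprem : c' ≤ c ⊔ (i' ⊓ pci)) :
    c' ∈ Ac := by
  exact hdown _ (hmeet c hc _ (hview _ (hatten i' hi' pci))) c' hprem
end
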